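/- arXiv:2602.18827 — 5 statements merged into one kernel-verified Lean document; each statement's English description precedes it below -/
import Mathlib

section
/- Global minimizer in the aggregation-dominated regime (Proposition 4.4(i), inequality part): Let d ≥ 3, 1+2/d < m < (d+2)/(d−2), α = (d+2−(d−2)m)/(dm), and M > 0. Assume C_* > 0 is a constant such that the Gagliardo–Nirenberg–Sobolev inequality (∫u^{m+1} dx)^{(α+2)/(m+1)} ≤ C_* (∫u dx)^α ∫|∇u|² dx holds for every u ∈ 𝒞. Set P_* = ((α+2)/(2 C_* M^α))^{1/(m−α−1)}. Then for every v ∈ 𝒞 with ∫v dx = M and (∫v^{m+1} dx)^{1/(m+1)} = P_*, one has F(v) ≥ ((dm−(d+2))/((d+2)(m+1))) P_*^{m+1}, and this lower bound is strictly positive. -/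
/-!
Write `p = m + 1`, `q = α + 2` and `A = C_* M^α`. Evaluated at `v`, the GNS inequality reads
`P_*^q ≤ A ∫|∇v|²`, and `P_*` is chosen so that `P_*^(p - q) = q / (2A)`; multiplying gives
`P_*^p / q ≤ (1/2)∫|∇v|²`, hence `F(v) ≥ (1/q - 1/p) P_*^p`. The constraint `m > 1 + 2/d` is
exactly what makes `p > q`, i.e. `1/q - 1/p > 0`.
-/

open MeasureTheory Real

noncomputable section

/-- The free energy `F(u) = (1/2)∫|∇u|² dx − (1/(m+1))∫u^{m+1} dx`. -/
def freeEnergy {d : ℕ} (m : ℝ) (u : EuclideanSpace ℝ (Fin d) → ℝ) : ℝ :=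
  (1 / 2) * (∫ x, ‖gradient u x‖ ^ 2) - (1 / (m + 1)) * ∫ x, u x ^ (m + 1)

theorem rpow_div_le_half_of_rpow_le {P A G p q : ℝ} (hP : 0 < P) (hp : p ≠ 0) (hq : 0 < q)
    (hA : 0 < A) (hbound : (P ^ p) ^ (q / p) ≤ A * G) (hPpow : P ^ (p - q) = q / (2 * A)) :
    P ^ p / q ≤ G / 2 := by
  have hPq : P ^ q ≤ A * G := by
    rwa [← rpow_mul hP.le, mul_div_cancel₀ q hp] at hbound
  rw [div_le_iff₀ hq]
  calc P ^ p = P ^ (p - q) * P ^ q := by rw [← rpow_add hP, sub_add_cancel]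
    _ ≤ q / (2 * A) * (A * G) := by rw [hPpow]; gcongr
    _ = G / 2 * q := by field_simp

section Exponents

variable {d m α : ℝ}

theorem alpha_add_two_eq (hd : d ≠ 0) (hm : m ≠ 0)
    (hα : α = (d + 2 - (d - 2) * m) / (d * m)) :
    α + 2 = (d + 2) * (m + 1) / (d * m) := by
  rw [hα]; field_simp; ring

theorem sub_alpha_sub_one_eq (hd : d ≠ 0) (hm : m ≠ 0)
    (hα : α = (d + 2 - (d - 2) * m) / (d * m)) :
    m - α - 1 = (m + 1) * (d * m - (d + 2)) / (d * m) := by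
  rw [hα]; field_simp; ring

theorem one_div_alpha_add_two_sub_one_div (hd : 0 < d) (hm : 0 < m)
    (hα : α = (d + 2 - (d - 2) * m) / (d * m)) :
    1 / (α + 2) - 1 / (m + 1) = (d * m - (d + 2)) / ((d + 2) * (m + 1)) := by
  rw [alpha_add_two_eq hd.ne' hm.ne' hα]
  field_simp

end Exponents

theorem aggregation_dominated_lower_bound_general (d : ℕ) (hd : 3 ≤ d) (m : ℝ)
    (hm1 : 1 + 2 / (d : ℝ) < m)
    (α : ℝ) (hα : α = ((d : ℝ) + 2 - ((d : ℝ) - 2) * m) / ((d : ℝ) * m))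
    (M : ℝ) (hM : 0 < M) (Cstar : ℝ) (hC : 0 < Cstar)
    (hGNS : ∀ u : EuclideanSpace ℝ (Fin d) → ℝ,
      (∀ x, 0 ≤ u x) → ContDiff ℝ 1 u →
      Integrable u → Integrable (fun x => ‖gradient u x‖ ^ 2) →
      Integrable (fun x => u x ^ (m + 1)) →
      (∫ x, u x ^ (m + 1)) ^ ((α + 2) / (m + 1)) ≤
        Cstar * (∫ x, u x) ^ α * ∫ x, ‖gradient u x‖ ^ 2)
    (Pstar : ℝ) (hP : Pstar = ((α + 2) / (2 * Cstar * M ^ α)) ^ (1 / (m - α - 1)))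
    (v : EuclideanSpace ℝ (Fin d) → ℝ)
    (hvpos : ∀ x, 0 ≤ v x) (hv : ContDiff ℝ 1 v)
    (hvint : Integrable v) (hvgrad : Integrable (fun x => ‖gradient v x‖ ^ 2))
    (hvpow : Integrable (fun x => v x ^ (m + 1)))
    (hvmass : (∫ x, v x) = M)
    (hvnorm : (∫ x, v x ^ (m + 1)) ^ (1 / (m + 1)) = Pstar) :
    freeEnergy m v ≥
      (((d : ℝ) * m - ((d : ℝ) + 2)) / (((d : ℝ) + 2) * (m + 1))) * Pstar ^ (m + 1) ∧
    0 < (((d : ℝ) * m - ((d : ℝ) + 2)) / (((d : ℝ) + 2) * (m + 1))) * Pstar ^ (m + 1) := by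
  have hd0 : (0 : ℝ) < d := by positivity
  have hm0 : 0 < m := lt_trans (by positivity) hm1
  have hdm : (d : ℝ) + 2 < d * m := by
    have := mul_lt_mul_of_pos_left hm1 hd0
    rwa [mul_add, mul_one, mul_div_cancel₀ _ hd0.ne'] at this
  have hq : 0 < α + 2 := by
    rw [alpha_add_two_eq hd0.ne' hm0.ne' hα]; positivity
  have hpq : 0 < m - α - 1 := by
    rw [sub_alpha_sub_one_eq hd0.ne' hm0.ne' hα]
    exact div_pos (mul_pos (by linarith) (by linarith)) (by positivity)
  have hA : 0 < Cstar * M ^ α := mul_pos hC (rpow_pos_of_pos hM α)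
  have hbase : 0 < (α + 2) / (2 * Cstar * M ^ α) := by positivity
  have hP0 : 0 < Pstar := by rw [hP]; exact rpow_pos_of_pos hbase _
  have hPpow : Pstar ^ (m + 1 - (α + 2)) = (α + 2) / (2 * (Cstar * M ^ α)) := by
    rw [← mul_assoc, hP, one_div, show m + 1 - (α + 2) = m - α - 1 by ring,
      rpow_inv_rpow hbase.le hpq.ne']
  have hI : ∫ x, v x ^ (m + 1) = Pstar ^ (m + 1) := by
    rw [← hvnorm, one_div, rpow_inv_rpow (integral_nonneg fun x => rpow_nonneg (hvpos x) _)
      (by linarith)]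
  have hgns := hGNS v hvpos hv hvint hvgrad hvpow
  rw [hvmass, hI] at hgns
  have hkin := rpow_div_le_half_of_rpow_le hP0 (by linarith) hq hA hgns hPpow
  have hcoef := one_div_alpha_add_two_sub_one_div hd0 hm0 hα
  refine ⟨?_, mul_pos (div_pos (by linarith) (by positivity)) (rpow_pos_of_pos hP0 _)⟩
  rw [freeEnergy, hI, ← hcoef]
  linarith [show (1 / (α + 2) - 1 / (m + 1)) * Pstar ^ (m + 1)
    = Pstar ^ (m + 1) / (α + 2) - 1 / (m + 1) * Pstar ^ (m + 1) by ring]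

/-- **Global minimizer in the aggregation-dominated regime**
(Proposition 4.4(i), inequality part). -/
theorem aggregation_dominated_lower_bound (d : ℕ) (hd : 3 ≤ d) (m : ℝ)
    (hm1 : 1 + 2 / (d : ℝ) < m) (hm2 : m < ((d : ℝ) + 2) / ((d : ℝ) - 2))
    (α : ℝ) (hα : α = ((d : ℝ) + 2 - ((d : ℝ) - 2) * m) / ((d : ℝ) * m))
    (M : ℝ) (hM : 0 < M) (Cstar : ℝ) (hC : 0 < Cstar)
    (hGNS : ∀ u : EuclideanSpace ℝ (Fin d) → ℝ,
      (∀ x, 0 ≤ u x) → ContDiff ℝ 1 u →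
      Integrable u → Integrable (fun x => ‖gradient u x‖ ^ 2) →
      Integrable (fun x => u x ^ (m + 1)) →
      (∫ x, u x ^ (m + 1)) ^ ((α + 2) / (m + 1)) ≤
        Cstar * (∫ x, u x) ^ α * ∫ x, ‖gradient u x‖ ^ 2)
    (Pstar : ℝ) (hP : Pstar = ((α + 2) / (2 * Cstar * M ^ α)) ^ (1 / (m - α - 1)))
    (v : EuclideanSpace ℝ (Fin d) → ℝ)
    (hvpos : ∀ x, 0 ≤ v x) (hv : ContDiff ℝ 1 v)
    (hvint : Integrable v) (hvgrad : Integrable (fun x => ‖gradient v x‖ ^ 2))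
    (hvpow : Integrable (fun x => v x ^ (m + 1)))
    (hvmass : (∫ x, v x) = M)
    (hvnorm : (∫ x, v x ^ (m + 1)) ^ (1 / (m + 1)) = Pstar) :
    freeEnergy m v ≥
      (((d : ℝ) * m - ((d : ℝ) + 2)) / (((d : ℝ) + 2) * (m + 1))) * Pstar ^ (m + 1) ∧
    0 < (((d : ℝ) * m - ((d : ℝ) + 2)) / (((d : ℝ) + 2) * (m + 1))) * Pstar ^ (m + 1) :=
  aggregation_dominated_lower_bound_general d hd m hm1 α hα M hM Cstar hC hGNS Pstar hP v hvpos hv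
    hvint hvgrad hvpow hvmass hvnorm
end
end

section
/- Lower bound on the L^{m+1} norm of steady states (Proposition 4.4(ii), inequality part): Let d ≥ 3, 1+2/d < m < (d+2)/(d−2), α = (d+2−(d−2)m)/(dm), and M > 0. Assume C_* > 0 is a constant such that the Gagliardo–Nirenberg–Sobolev inequality (∫u^{m+1} dx)^{(α+2)/(m+1)} ≤ C_* (∫u dx)^α ∫|∇u|² dx holds for every u ∈ 𝒞. Set P_* = ((α+2)/(2 C_* M^α))^{1/(m−α−1)}. Let w ∈ 𝒞 satisfy ∫w dx = M, ∫w^{m+1} dx > 0, and the Pohozaev identity (dm/(m+1)) ∫w^{m+1} dx = ((d+2)/2) ∫|∇w|² dx. Then (∫w^{m+1} dx)^{1/(m+1)} ≥ P_*, and consequently F(w) ≥ ((dm−(d+2))/((d+2)(m+1))) P_*^{m+1}. -/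
/-!
The Pohozaev identity fixes the ratio of the Dirichlet energy to `∫ w^{m+1}`: it is `2/(α+2)`.
Feeding this into the Gagliardo–Nirenberg–Sobolev inequality, with `y = ‖w‖_{m+1}`, gives
`y^{α+2} ≤ (2 C_* M^α/(α+2)) y^{m+1}`; since `α + 2 < m + 1` exactly when `m > 1 + 2/d`, this
bounds `y` from below by `P_*`. The identity also turns the free energy into a positive multiple
of `∫ w^{m+1} = y^{m+1}`.
-/

open MeasureTheory Real

noncomputable section

theorem Real.rpow_one_div_sub_le_of_mul_rpow_le {y Q a b : ℝ} (hy : 0 < y) (hQ : 0 ≤ Q)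
    (hab : a < b) (h : Q * y ^ a ≤ y ^ b) : Q ^ (1 / (b - a)) ≤ y := by
  have hQle : Q ≤ y ^ (b - a) := by
    rw [rpow_sub hy, le_div_iff₀ (rpow_pos_of_pos hy a)]
    exact h
  calc Q ^ (1 / (b - a)) ≤ (y ^ (b - a)) ^ (1 / (b - a)) :=
        rpow_le_rpow hQ hQle (by simp only [one_div, inv_nonneg]; linarith)
    _ = y := by rw [one_div, rpow_rpow_inv hy.le (by linarith)]

theorem Real.inv_rpow_one_div_sub_le_rpow_one_div {P K a b : ℝ} (hP : 0 < P) (hK : 0 < K)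
    (hab : a < b) (hb : 0 < b) (h : P ^ (a / b) ≤ K * P) :
    K⁻¹ ^ (1 / (b - a)) ≤ P ^ (1 / b) := by
  have hroot_rpow (c : ℝ) : (P ^ (1 / b)) ^ c = P ^ (c / b) := by
    rw [← rpow_mul hP.le, one_div_mul_eq_div]
  refine rpow_one_div_sub_le_of_mul_rpow_le (rpow_pos_of_pos hP _) (inv_nonneg.mpr hK.le) hab ?_
  rw [hroot_rpow, hroot_rpow, div_self hb.ne', rpow_one, inv_mul_le_iff₀ hK]
  exact h

/-- The exponent `α` of the mass in the Gagliardo–Nirenberg–Sobolev inequality. -/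
def gnsExponent (d m : ℝ) : ℝ := (d + 2 - (d - 2) * m) / (d * m)

theorem gnsExponent_add_two {d m : ℝ} (hd : d ≠ 0) (hm : m ≠ 0) :
    gnsExponent d m + 2 = (d + 2) * (m + 1) / (d * m) := by
  rw [gnsExponent]
  field_simp
  ring

theorem gnsExponent_add_two_lt {d m : ℝ} (hd : 0 < d) (hdm : d + 2 < d * m) :
    gnsExponent d m + 2 < m + 1 := by
  have hm : 0 < m := pos_of_mul_pos_right (by linarith) hd.le
  rw [gnsExponent_add_two hd.ne' hm.ne', div_lt_iff₀ (by positivity)]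
  nlinarith

section Pohozaev

variable {d : ℕ} {m : ℝ} {u : EuclideanSpace ℝ (Fin d) → ℝ}

theorem integral_norm_gradient_sq_eq_of_pohozaev (hm : m + 1 ≠ 0)
    (hpoho : ((d : ℝ) * m / (m + 1)) * ∫ x, u x ^ (m + 1) =
      (((d : ℝ) + 2) / 2) * ∫ x, ‖gradient u x‖ ^ 2) :
    ∫ x, ‖gradient u x‖ ^ 2 = 2 * d * m / ((d + 2) * (m + 1)) * ∫ x, u x ^ (m + 1) := by
  have hd : (d : ℝ) + 2 ≠ 0 := by positivity
  field_simp at hpoho ⊢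
  linarith

theorem freeEnergy_eq_of_pohozaev (hm : m + 1 ≠ 0)
    (hpoho : ((d : ℝ) * m / (m + 1)) * ∫ x, u x ^ (m + 1) =
      (((d : ℝ) + 2) / 2) * ∫ x, ‖gradient u x‖ ^ 2) :
    freeEnergy m u =
      ((d * m - (d + 2)) / ((d + 2) * (m + 1))) * ∫ x, u x ^ (m + 1) := by
  have hd : (d : ℝ) + 2 ≠ 0 := by positivity
  rw [freeEnergy, integral_norm_gradient_sq_eq_of_pohozaev hm hpoho]
  field_simp

end Pohozaev

theorem steady_state_norm_lower_bound_general (d : ℕ) (hd : 3 ≤ d) (m : ℝ)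
    (hm1 : 1 + 2 / (d : ℝ) < m)
    (α : ℝ) (hα : α = ((d : ℝ) + 2 - ((d : ℝ) - 2) * m) / ((d : ℝ) * m))
    (M : ℝ) (hM : 0 < M) (Cstar : ℝ) (hC : 0 < Cstar)
    (hGNS : ∀ u : EuclideanSpace ℝ (Fin d) → ℝ,
      (∀ x, 0 ≤ u x) → ContDiff ℝ 1 u →
      Integrable u → Integrable (fun x => ‖gradient u x‖ ^ 2) →
      Integrable (fun x => u x ^ (m + 1)) →
      (∫ x, u x ^ (m + 1)) ^ ((α + 2) / (m + 1)) ≤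
        Cstar * (∫ x, u x) ^ α * ∫ x, ‖gradient u x‖ ^ 2)
    (Pstar : ℝ) (hP : Pstar = ((α + 2) / (2 * Cstar * M ^ α)) ^ (1 / (m - α - 1)))
    (w : EuclideanSpace ℝ (Fin d) → ℝ)
    (hwpos : ∀ x, 0 ≤ w x) (hw : ContDiff ℝ 1 w)
    (hwint : Integrable w) (hwgrad : Integrable (fun x => ‖gradient w x‖ ^ 2))
    (hwpow : Integrable (fun x => w x ^ (m + 1)))
    (hwmass : (∫ x, w x) = M)
    (hwpow_pos : 0 < ∫ x, w x ^ (m + 1))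
    (hpoho : ((d : ℝ) * m / (m + 1)) * ∫ x, w x ^ (m + 1) =
      (((d : ℝ) + 2) / 2) * ∫ x, ‖gradient w x‖ ^ 2) :
    (∫ x, w x ^ (m + 1)) ^ (1 / (m + 1)) ≥ Pstar ∧
    freeEnergy m w ≥
      (((d : ℝ) * m - ((d : ℝ) + 2)) / (((d : ℝ) + 2) * (m + 1))) * Pstar ^ (m + 1) := by
  have hd0 : (0 : ℝ) < d := Nat.cast_pos.mpr (by omega)
  have hdm : (d : ℝ) + 2 < d * m := by
    rwa [← div_lt_iff₀' hd0, add_div, div_self hd0.ne']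
  have hm : 0 < m := pos_of_mul_pos_right (by linarith) hd0.le
  have hα2 : α + 2 = (d + 2) * (m + 1) / (d * m) := hα ▸ gnsExponent_add_two hd0.ne' hm.ne'
  have hα2pos : 0 < α + 2 := by rw [hα2]; positivity
  have hαm : α + 2 < m + 1 := hα ▸ gnsExponent_add_two_lt hd0 hdm
  have hGNSw := hGNS w hwpos hw hwint hwgrad hwpow
  rw [hwmass, integral_norm_gradient_sq_eq_of_pohozaev (by linarith) hpoho,
    show 2 * d * m / ((d + 2) * (m + 1)) = 2 / (α + 2) by rw [hα2]; field_simp] at hGNSw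
  have hnorm : Pstar ≤ (∫ x, w x ^ (m + 1)) ^ (1 / (m + 1)) := by
    rw [hP, show m - α - 1 = m + 1 - (α + 2) by ring,
      show (α + 2) / (2 * Cstar * M ^ α) = (Cstar * M ^ α * (2 / (α + 2)))⁻¹ by field_simp]
    exact inv_rpow_one_div_sub_le_rpow_one_div hwpow_pos (by positivity) hαm (by linarith)
      (by rwa [← mul_assoc] at hGNSw)
  refine ⟨hnorm, ?_⟩
  have hPstar_pow : Pstar ^ (m + 1) ≤ ∫ x, w x ^ (m + 1) := by
    have hPstar : 0 ≤ Pstar := hP ▸ rpow_nonneg (by positivity) _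
    simpa only [one_div, rpow_inv_rpow hwpow_pos.le (by linarith : m + 1 ≠ 0)]
      using rpow_le_rpow hPstar hnorm (by linarith : 0 ≤ m + 1)
  rw [freeEnergy_eq_of_pohozaev (by linarith) hpoho]
  exact mul_le_mul_of_nonneg_left hPstar_pow (div_nonneg (by linarith) (by positivity))

/-- **Lower bound on the `L^{m+1}` norm of steady states**
(Proposition 4.4(ii), inequality part). -/
theorem steady_state_norm_lower_bound (d : ℕ) (hd : 3 ≤ d) (m : ℝ)
    (hm1 : 1 + 2 / (d : ℝ) < m) (hm2 : m < ((d : ℝ) + 2) / ((d : ℝ) - 2))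
    (α : ℝ) (hα : α = ((d : ℝ) + 2 - ((d : ℝ) - 2) * m) / ((d : ℝ) * m))
    (M : ℝ) (hM : 0 < M) (Cstar : ℝ) (hC : 0 < Cstar)
    (hGNS : ∀ u : EuclideanSpace ℝ (Fin d) → ℝ,
      (∀ x, 0 ≤ u x) → ContDiff ℝ 1 u →
      Integrable u → Integrable (fun x => ‖gradient u x‖ ^ 2) →
      Integrable (fun x => u x ^ (m + 1)) →
      (∫ x, u x ^ (m + 1)) ^ ((α + 2) / (m + 1)) ≤
        Cstar * (∫ x, u x) ^ α * ∫ x, ‖gradient u x‖ ^ 2)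
    (Pstar : ℝ) (hP : Pstar = ((α + 2) / (2 * Cstar * M ^ α)) ^ (1 / (m - α - 1)))
    (w : EuclideanSpace ℝ (Fin d) → ℝ)
    (hwpos : ∀ x, 0 ≤ w x) (hw : ContDiff ℝ 1 w)
    (hwint : Integrable w) (hwgrad : Integrable (fun x => ‖gradient w x‖ ^ 2))
    (hwpow : Integrable (fun x => w x ^ (m + 1)))
    (hwmass : (∫ x, w x) = M)
    (hwpow_pos : 0 < ∫ x, w x ^ (m + 1))
    (hpoho : ((d : ℝ) * m / (m + 1)) * ∫ x, w x ^ (m + 1) =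
      (((d : ℝ) + 2) / 2) * ∫ x, ‖gradient w x‖ ^ 2) :
    (∫ x, w x ^ (m + 1)) ^ (1 / (m + 1)) ≥ Pstar ∧
    freeEnergy m w ≥
      (((d : ℝ) * m - ((d : ℝ) + 2)) / (((d : ℝ) + 2) * (m + 1))) * Pstar ^ (m + 1) :=
  steady_state_norm_lower_bound_general d hd m hm1 α hα M hM Cstar hC hGNS Pstar hP w hwpos hw hwint
    hwgrad hwpow hwmass hwpow_pos hpoho
end
end

section
/- Second-moment dissipation identity, spatial part (Lemma 5.2): Let d ≥ 3 and m > 0, and let u : ℝ^d → ℝ be a nonnegative smooth compactly supported function. Then 2∫_{ℝ^d} u(x) (x · ∇(Δu)(x)) dx + (2m/(m+1)) ∫_{ℝ^d} x · ∇(u^{m+1})(x) dx = (d+2) ∫_{ℝ^d} |∇u(x)|² dx − (2dm/(m+1)) ∫_{ℝ^d} u(x)^{m+1} dx. Equivalently, the right-hand side equals 2(d+2) F(u) − 2((dm−(d+2))/(m+1)) ∫u^{m+1} dx. -/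
open MeasureTheory Real

noncomputable section

/-- The Laplacian of a function on `ℝ^d`, as the trace of its second derivative
computed in the standard orthonormal basis. -/
def laplacian {d : ℕ} (u : EuclideanSpace ℝ (Fin d) → ℝ)
    (x : EuclideanSpace ℝ (Fin d)) : ℝ :=
  ∑ i : Fin d,
    fderiv ℝ (fun y => fderiv ℝ u y (EuclideanSpace.single i 1)) x
      (EuclideanSpace.single i 1)

namespace SMI

variable {d : ℕ}

local notation "E" => EuclideanSpace ℝ (Fin d)

lemma inner_grad (f : E → ℝ) (x : E) : (inner ℝ x (gradient f x) : ℝ) = fderiv ℝ f x x := by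
  rw [real_inner_comm, gradient, InnerProductSpace.toDual_symm_apply]

lemma sum_single (x : E) : ∑ i : Fin d, x i • EuclideanSpace.single i (1:ℝ) = x := by
  ext j
  have : (∑ i : Fin d, x i • EuclideanSpace.single i (1:ℝ)) j
      = ∑ i : Fin d, (x i • EuclideanSpace.single i (1:ℝ)) j :=
    by rw [WithLp.ofLp_sum]; exact Finset.sum_apply j Finset.univ _
  rw [this]
  simp [EuclideanSpace.single_apply]

lemma fderiv_apply_self (f : E → ℝ) (x : E) :
    fderiv ℝ f x x = ∑ i : Fin d, x i * fderiv ℝ f x (EuclideanSpace.single i 1) := by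
  have h := congrArg (fderiv ℝ f x) (sum_single x)
  rw [← h, map_sum]
  simp [smul_eq_mul]

lemma norm_grad_sq (f : E → ℝ) (x : E) (hf : DifferentiableAt ℝ f x) :
    ‖gradient f x‖ ^ 2 = ∑ i : Fin d, (fderiv ℝ f x (EuclideanSpace.single i 1)) ^ 2 := by
  have h : ∀ i, fderiv ℝ f x (EuclideanSpace.single i 1) = gradient f x i := by
    intro i
    rw [show gradient f x i = (inner ℝ (gradient f x) (EuclideanSpace.single i (1:ℝ)) : ℝ) by
      simp only [EuclideanSpace.inner_single_right, conj_trivial, one_mul]]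
    rw [gradient, InnerProductSpace.toDual_symm_apply]
  simp_rw [h]
  rw [EuclideanSpace.norm_eq]
  rw [Real.sq_sqrt (by positivity)]
  simp [sq_abs]


abbrev e (d : ℕ) (i : Fin d) : EuclideanSpace ℝ (Fin d) := EuclideanSpace.single i 1

/-- Bundle of regularity conditions. -/
structure Nice (f : EuclideanSpace ℝ (Fin d) → ℝ) : Prop where
  diff : Differentiable ℝ f
  cont' : ∀ v : EuclideanSpace ℝ (Fin d), Continuous fun x => fderiv ℝ f x v
  supp : HasCompactSupport f

lemma Nice.cont {f : E → ℝ} (hf : Nice f) : Continuous f := hf.diff.continuous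

lemma integ_mul {f g : E → ℝ} (hf : Continuous f) (hg : Continuous g)
    (hgs : HasCompactSupport g) : Integrable (fun x => f x * g x) :=
  (hf.mul hg).integrable_of_hasCompactSupport hgs.mul_left

lemma ibp (f g : E → ℝ) (v : E)
    (hf : Differentiable ℝ f) (hf' : Continuous fun x => fderiv ℝ f x v)
    (hg : Nice g) :
    ∫ x, f x * fderiv ℝ g x v = -∫ x, fderiv ℝ f x v * g x := by
  apply integral_mul_fderiv_eq_neg_fderiv_mul_of_integrable
  · exact integ_mul hf' hg.cont hg.supp
  · exact (hf.continuous.mul (hg.cont' v)).integrable_of_hasCompactSupport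
      (hg.supp.fderiv_apply ℝ v).mul_left
  · exact integ_mul hf.continuous hg.cont hg.supp
  · exact fun x _ => hf x
  · exact fun x _ => hg.diff x

lemma contDiff_dv {f : E → ℝ} (hf : ContDiff ℝ (⊤ : ℕ∞) f) (v : E) :
    ContDiff ℝ (⊤ : ℕ∞) (fun x => fderiv ℝ f x v) :=
  (hf.fderiv_right (by simp)).clm_apply contDiff_const

lemma nice_of_smooth {f : E → ℝ} (hf : ContDiff ℝ (⊤ : ℕ∞) f) (hs : HasCompactSupport f) :
    Nice f :=
  ⟨hf.differentiable (by simp), fun v => (contDiff_dv hf v).continuous, hs⟩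

lemma nice_pd {u : E → ℝ} (hu : ContDiff ℝ (⊤ : ℕ∞) u) (hs : HasCompactSupport u) (i : Fin d) :
    Nice fun x => fderiv ℝ u x (e d i) :=
  nice_of_smooth (contDiff_dv hu _) (hs.fderiv_apply ℝ _)

lemma lap_smooth {u : E → ℝ} (hu : ContDiff ℝ (⊤ : ℕ∞) u) : ContDiff ℝ (⊤ : ℕ∞) (laplacian u) := by
  unfold laplacian
  exact ContDiff.sum fun i _ => contDiff_dv (contDiff_dv hu _) _

lemma tsupport_pd_subset (f : E → ℝ) (v : E) :
    tsupport (fun x => fderiv ℝ f x v) ⊆ tsupport f := by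
  refine closure_minimal ?_ isClosed_closure
  intro x hx
  apply support_fderiv_subset ℝ (f := f)
  simp only [Function.mem_support] at hx ⊢
  exact fun h => hx (by rw [h]; rfl)

lemma lap_supp {u : E → ℝ} (hs : HasCompactSupport u) :
    HasCompactSupport (laplacian u) := by
  apply HasCompactSupport.intro hs
  intro x hx
  unfold laplacian
  apply Finset.sum_eq_zero
  intro i _
  have hx' : x ∉ tsupport fun y => fderiv ℝ u y (EuclideanSpace.single i 1) :=
    fun h => hx (tsupport_pd_subset u _ h)
  rw [fderiv_of_notMem_tsupport ℝ (f := fun y => fderiv ℝ u y (EuclideanSpace.single i 1)) hx']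
  rfl

lemma nice_lap {u : E → ℝ} (hu : ContDiff ℝ (⊤ : ℕ∞) u) (hs : HasCompactSupport u) :
    Nice (laplacian u) := nice_of_smooth (lap_smooth hu) (lap_supp hs)

lemma continuous_coord (i : Fin d) : Continuous fun x : E => x i :=
  (EuclideanSpace.proj (𝕜 := ℝ) i).continuous

lemma diff_coord (i : Fin d) : Differentiable ℝ fun x : E => x i :=
  (EuclideanSpace.proj (𝕜 := ℝ) i).differentiable

lemma fderiv_coord (i : Fin d) (x : E) :
    fderiv ℝ (fun y : E => y i) x = EuclideanSpace.proj (𝕜 := ℝ) i :=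
  (EuclideanSpace.proj (𝕜 := ℝ) i).fderiv

lemma fderiv_coord_apply (i j : Fin d) (x : E) :
    fderiv ℝ (fun y : E => y i) x (e d j) = if j = i then 1 else 0 := by
  rw [fderiv_coord]
  simp [EuclideanSpace.single_apply, eq_comm]

lemma rpow_hasFDerivAt {m : ℝ} {u : E → ℝ} (hu : Differentiable ℝ u) (hm : 0 < m) (x : E) :
    HasFDerivAt (fun y => u y ^ (m + 1)) (((m + 1) * u x ^ m) • fderiv ℝ u x) x := by
  have h := Real.hasDerivAt_rpow_const (x := u x) (p := m + 1) (Or.inr (by linarith))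
  have h2 := h.comp_hasFDerivAt x (hu x).hasFDerivAt
  simp only [add_sub_cancel_right] at h2
  exact h2

lemma nice_rpow {m : ℝ} {u : E → ℝ} (hu : ContDiff ℝ (⊤ : ℕ∞) u) (hs : HasCompactSupport u)
    (hm : 0 < m) : Nice fun y => u y ^ (m + 1) where
  diff := fun x => (rpow_hasFDerivAt (hu.differentiable (by simp)) hm x).differentiableAt
  cont' := by
    intro v
    have h : (fun x => fderiv ℝ (fun y => u y ^ (m + 1)) x v)
        = fun x => ((m + 1) * u x ^ m) * fderiv ℝ u x v := by
      funext x
      rw [(rpow_hasFDerivAt (hu.differentiable (by simp)) hm x).fderiv]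
      simp
    rw [h]
    exact (continuous_const.mul (hu.continuous.rpow_const fun x => Or.inr hm.le)).mul
      (contDiff_dv hu v).continuous
  supp := hs.comp_left (g := fun t : ℝ => t ^ (m + 1)) (Real.zero_rpow (by positivity))

/-- `∫ Df(x)(x) = -d ∫ f`. -/
lemma integral_fderiv_self {g : E → ℝ} (hg : Nice g) :
    ∫ x, fderiv ℝ g x x = -(d : ℝ) * ∫ x, g x := by
  have h0 : (fun x : E => fderiv ℝ g x x)
      = fun x => ∑ i : Fin d, x i * fderiv ℝ g x (e d i) := by
    funext x; exact fderiv_apply_self g x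
  rw [h0, integral_finset_sum _ (fun i _ =>
    integ_mul (continuous_coord i) (hg.cont' _) (hg.supp.fderiv_apply ℝ _))]
  have h1 : ∀ i : Fin d, ∫ x, x i * fderiv ℝ g x (e d i) = -∫ x, g x := by
    intro i
    rw [ibp (fun y : E => y i) g (e d i) (diff_coord i)
      (by simp only [fderiv_coord_apply]; simp; exact continuous_const) hg]
    congr 1
    refine integral_congr_ae (Filter.Eventually.of_forall fun x => ?_)
    simp only [fderiv_coord_apply]
    simp
  simp_rw [h1]
  simp [mul_comm]

lemma schwarz {u : E → ℝ} (hu : ContDiff ℝ (⊤ : ℕ∞) u) (x v w : E) :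
    fderiv ℝ (fun y => fderiv ℝ u y v) x w = fderiv ℝ (fun y => fderiv ℝ u y w) x v := by
  have hd : Differentiable ℝ (fderiv ℝ u) := (hu.fderiv_right (m := 1) (WithTop.coe_le_coe.mpr le_top)).differentiable one_ne_zero
  have h1 : ∀ c : E, fderiv ℝ (fun y => fderiv ℝ u y c) x
      = (fderiv ℝ (fderiv ℝ u) x).flip c := by
    intro c
    have h := fderiv_clm_apply (𝕜 := ℝ) (hd x) (differentiableAt_const c)
    simpa using h
  rw [h1 v, h1 w]
  simp only [ContinuousLinearMap.flip_apply]
  exact second_derivative_symmetric (fun y => (hu.differentiable (by simp) y).hasFDerivAt)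
    (hd x).hasFDerivAt w v

/-- `∫ xᵢ (∂ᵢ w) w = -(1/2) ∫ w²`. -/
lemma weighted_self {w : E → ℝ} (hw : Nice w) (i : Fin d) :
    ∫ x, x i * fderiv ℝ w x (e d i) * w x = -(1/2) * ∫ x, w x ^ 2 := by
  have hf : Differentiable ℝ fun x : E => x i * w x := (diff_coord i).mul hw.diff
  have hfd : ∀ x : E, fderiv ℝ (fun y : E => y i * w y) x (e d i)
      = w x + x i * fderiv ℝ w x (e d i) := by
    intro x
    rw [fderiv_fun_mul (diff_coord i x) (hw.diff x)]
    simp only [ContinuousLinearMap.add_apply, ContinuousLinearMap.smul_apply,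
      fderiv_coord_apply, smul_eq_mul]
    simp
    ring
  have hf' : Continuous fun x => fderiv ℝ (fun y : E => y i * w y) x (e d i) := by
    simp only [hfd]
    exact hw.cont.add ((continuous_coord i).mul (hw.cont' _))
  have h := ibp (fun y : E => y i * w y) w (e d i) hf hf' hw
  have hA : ∫ x, (x i * w x) * fderiv ℝ w x (e d i)
      = ∫ x, x i * fderiv ℝ w x (e d i) * w x := by
    refine integral_congr_ae (Filter.Eventually.of_forall fun x => by ring)
  have hB : ∫ x, fderiv ℝ (fun y : E => y i * w y) x (e d i) * w x
      = (∫ x, w x ^ 2) + ∫ x, x i * fderiv ℝ w x (e d i) * w x := by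
    rw [show (fun x => fderiv ℝ (fun y : E => y i * w y) x (e d i) * w x)
        = fun x => w x ^ 2 + (x i * fderiv ℝ w x (e d i)) * w x from
      funext fun x => by rw [hfd]; ring]
    have h1 : Integrable fun x : E => w x ^ 2 :=
      (integ_mul hw.cont hw.cont hw.supp).congr
        (Filter.Eventually.of_forall fun x => (pow_two (w x)).symm)
    rw [integral_add h1 (integ_mul ((continuous_coord i).fun_mul (hw.cont' _)) hw.cont hw.supp)]
  rw [hA] at h
  rw [hB] at h
  linarith [h]

lemma int_u_lap {u : E → ℝ} (hu : ContDiff ℝ (⊤ : ℕ∞) u) (hs : HasCompactSupport u) :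
    ∫ x, u x * laplacian u x = -∫ x, ∑ i : Fin d, fderiv ℝ u x (e d i) ^ 2 := by
  have hNu := nice_of_smooth hu hs
  have hNp := nice_pd hu hs
  have sqint : ∀ i : Fin d, Integrable fun x : E => fderiv ℝ u x (e d i) ^ 2 := fun i =>
    ((hNu.cont' _).fun_pow 2).integrable_of_hasCompactSupport
      ((hs.fderiv_apply ℝ _).comp_left (g := fun t : ℝ => t ^ 2) (by simp))
  have h0 : (fun x => u x * laplacian u x) = fun x => ∑ i : Fin d,
      u x * fderiv ℝ (fun y => fderiv ℝ u y (e d i)) x (e d i) := by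
    funext x; unfold laplacian; rw [Finset.mul_sum]
  rw [h0, integral_finset_sum _ fun i _ =>
    integ_mul hNu.cont ((hNp i).cont' _) ((hNp i).supp.fderiv_apply ℝ _)]
  have h1 : ∀ i : Fin d, ∫ x, u x * fderiv ℝ (fun y => fderiv ℝ u y (e d i)) x (e d i)
      = -∫ x, fderiv ℝ u x (e d i) ^ 2 := by
    intro i
    rw [ibp u (fun y => fderiv ℝ u y (e d i)) (e d i) hNu.diff (hNu.cont' _) (hNp i)]
    congr 1
    exact integral_congr_ae (Filter.Eventually.of_forall fun x => (pow_two _).symm)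
  simp_rw [h1]
  rw [integral_finset_sum _ fun i _ => sqint i, ← Finset.sum_neg_distrib]

lemma key {u : E → ℝ} (hu : ContDiff ℝ (⊤ : ℕ∞) u) (hs : HasCompactSupport u) :
    2 * ∫ x, u x * fderiv ℝ (laplacian u) x x
      = ((d : ℝ) + 2) * ∫ x, ∑ i : Fin d, fderiv ℝ u x (e d i) ^ 2 := by
  have hNu := nice_of_smooth hu hs
  have hNp := nice_pd hu hs
  have hNg := nice_lap hu hs
  have sqint : ∀ i : Fin d, Integrable fun x : E => fderiv ℝ u x (e d i) ^ 2 := fun i =>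
    ((hNu.cont' _).fun_pow 2).integrable_of_hasCompactSupport
      ((hs.fderiv_apply ℝ _).comp_left (g := fun t : ℝ => t ^ 2) (by simp))
  set g := laplacian u with hg
  set K := ∫ x, ∑ i : Fin d, fderiv ℝ u x (e d i) ^ 2 with hK
  have hKsum : ∑ i : Fin d, ∫ x, fderiv ℝ u x (e d i) ^ 2 = K := by
    rw [hK, integral_finset_sum _ fun i _ => sqint i]
  -- Step 1
  have step1 : ∫ x, u x * fderiv ℝ g x x
      = ∑ i : Fin d, ∫ x, (u x * x i) * fderiv ℝ g x (e d i) := by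
    have h0 : (fun x : E => u x * fderiv ℝ g x x)
        = fun x => ∑ i : Fin d, (u x * x i) * fderiv ℝ g x (e d i) := by
      funext x
      rw [fderiv_apply_self, Finset.mul_sum]
      exact Finset.sum_congr rfl fun i _ => by ring
    rw [h0, integral_finset_sum _ fun i _ =>
      integ_mul (hNu.cont.fun_mul (continuous_coord i)) (hNg.cont' _) (hNg.supp.fderiv_apply ℝ _)]
  -- derivative of u * coord
  have hfd : ∀ (i : Fin d) (x : E), fderiv ℝ (fun y : E => u y * y i) x (e d i)
      = u x + x i * fderiv ℝ u x (e d i) := by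
    intro i x
    rw [fderiv_fun_mul (hNu.diff x) (diff_coord i x)]
    simp only [ContinuousLinearMap.add_apply, ContinuousLinearMap.smul_apply, smul_eq_mul,
      fderiv_coord_apply]
    simp
  -- Step 2
  have step2 : ∀ i : Fin d, ∫ x, (u x * x i) * fderiv ℝ g x (e d i)
      = -(∫ x, u x * g x) - ∫ x, (x i * fderiv ℝ u x (e d i)) * g x := by
    intro i
    rw [ibp (fun y : E => u y * y i) g (e d i) (hNu.diff.mul (diff_coord i))
      (by simp only [hfd]; exact hNu.cont.add ((continuous_coord i).mul (hNu.cont' _))) hNg]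
    have h0 : (fun x : E => fderiv ℝ (fun y : E => u y * y i) x (e d i) * g x)
        = fun x => u x * g x + (x i * fderiv ℝ u x (e d i)) * g x := by
      funext x; rw [hfd]; ring
    rw [h0, integral_add (integ_mul hNu.cont hNg.cont hNg.supp)
      (integ_mul ((continuous_coord i).fun_mul (hNu.cont' _)) hNg.cont hNg.supp)]
    ring
  -- Step 3: expand g in J_i
  have step3 : ∀ i : Fin d, ∫ x, (x i * fderiv ℝ u x (e d i)) * g x
      = ∑ j : Fin d, ∫ x, (x i * fderiv ℝ u x (e d i)) *
          fderiv ℝ (fun y => fderiv ℝ u y (e d j)) x (e d j) := by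
    intro i
    have h0 : (fun x : E => (x i * fderiv ℝ u x (e d i)) * g x)
        = fun x => ∑ j : Fin d, (x i * fderiv ℝ u x (e d i)) *
            fderiv ℝ (fun y => fderiv ℝ u y (e d j)) x (e d j) := by
      funext x; rw [hg]; unfold laplacian; rw [Finset.mul_sum]
    rw [h0, integral_finset_sum _ fun j _ =>
      integ_mul ((continuous_coord i).fun_mul (hNu.cont' _)) ((hNp j).cont' _)
        ((hNp j).supp.fderiv_apply ℝ _)]
  -- derivative of coord * pd
  have hfd2 : ∀ (i j : Fin d) (x : E),
      fderiv ℝ (fun y : E => y i * fderiv ℝ u y (e d i)) x (e d j)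
      = x i * fderiv ℝ (fun y => fderiv ℝ u y (e d i)) x (e d j)
        + (if j = i then 1 else 0) * fderiv ℝ u x (e d i) := by
    intro i j x
    rw [fderiv_fun_mul (diff_coord i x) ((hNp i).diff x)]
    simp only [ContinuousLinearMap.add_apply, ContinuousLinearMap.smul_apply, smul_eq_mul,
      fderiv_coord_apply]
    ring
  -- Step 4
  have step4 : ∀ i j : Fin d, ∫ x, (x i * fderiv ℝ u x (e d i)) *
      fderiv ℝ (fun y => fderiv ℝ u y (e d j)) x (e d j)
      = -(∫ x, x i * fderiv ℝ (fun y => fderiv ℝ u y (e d j)) x (e d i) * fderiv ℝ u x (e d j))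
        - (if j = i then 1 else 0) * ∫ x, fderiv ℝ u x (e d i) * fderiv ℝ u x (e d j) := by
    intro i j
    rw [ibp (fun y : E => y i * fderiv ℝ u y (e d i)) (fun y => fderiv ℝ u y (e d j)) (e d j)
      ((diff_coord i).mul (hNp i).diff)
      (by simp only [hfd2]
          exact ((continuous_coord i).mul ((hNp i).cont' _)).add
            (continuous_const.mul (hNu.cont' _))) (hNp j)]
    have h0 : (fun x : E => fderiv ℝ (fun y : E => y i * fderiv ℝ u y (e d i)) x (e d j) *
          fderiv ℝ u x (e d j))
        = fun x => x i * fderiv ℝ (fun y => fderiv ℝ u y (e d j)) x (e d i) * fderiv ℝ u x (e d j)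
          + (if j = i then 1 else 0) * (fderiv ℝ u x (e d i) * fderiv ℝ u x (e d j)) := by
      funext x
      rw [hfd2 i j x, schwarz hu x (e d i) (e d j)]
      ring
    rw [h0, integral_add
      (integ_mul ((continuous_coord i).fun_mul ((hNp j).cont' _)) (hNu.cont' _)
        (hs.fderiv_apply ℝ _))
      (((integ_mul (hNu.cont' _) (hNu.cont' _) (hs.fderiv_apply ℝ _))).const_mul _),
      integral_const_mul]
    ring
  -- Step 5
  have step5 : ∀ j : Fin d, ∑ i : Fin d, ∫ x, x i *
      fderiv ℝ (fun y => fderiv ℝ u y (e d j)) x (e d i) * fderiv ℝ u x (e d j)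
      = -((d : ℝ)/2) * ∫ x, fderiv ℝ u x (e d j) ^ 2 := by
    intro j
    have hws := fun i : Fin d => weighted_self (hNp j) i
    simp_rw [hws]
    simp [Finset.sum_const, Finset.card_univ]
    ring
  -- assemble J
  have hJ : ∑ i : Fin d, ∫ x, (x i * fderiv ℝ u x (e d i)) * g x
      = ((d : ℝ)/2) * K - K := by
    simp_rw [step3, step4]
    have hBi : ∀ i : Fin d, ∫ x, fderiv ℝ u x (e d i) * fderiv ℝ u x (e d i)
        = ∫ x, fderiv ℝ u x (e d i) ^ 2 := fun i =>
      integral_congr_ae (Filter.Eventually.of_forall fun x => (pow_two _).symm)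
    have e1 : ∀ i : Fin d, ∑ j : Fin d,
        (-(∫ x, x i * fderiv ℝ (fun y => fderiv ℝ u y (e d j)) x (e d i) * fderiv ℝ u x (e d j))
          - (if j = i then 1 else 0) * ∫ x, fderiv ℝ u x (e d i) * fderiv ℝ u x (e d j))
        = (-∑ j : Fin d, ∫ x, x i * fderiv ℝ (fun y => fderiv ℝ u y (e d j)) x (e d i) *
            fderiv ℝ u x (e d j)) - ∫ x, fderiv ℝ u x (e d i) ^ 2 := by
      intro i
      rw [Finset.sum_sub_distrib, ← Finset.sum_neg_distrib, ← hBi i]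
      congr 1
      simp [ite_mul]
    simp_rw [e1]
    rw [Finset.sum_sub_distrib, Finset.sum_neg_distrib, Finset.sum_comm]
    have e2 : (∑ j : Fin d, ∑ i : Fin d, ∫ x, x i *
        fderiv ℝ (fun y => fderiv ℝ u y (e d j)) x (e d i) * fderiv ℝ u x (e d j))
        = ∑ j : Fin d, -((d : ℝ)/2) * ∫ x, fderiv ℝ u x (e d j) ^ 2 :=
      Finset.sum_congr rfl fun j _ => step5 j
    rw [e2, ← Finset.mul_sum, hKsum]
    ring
  -- final assembly
  have hug : ∫ x, u x * g x = -K := by rw [hg, hK]; exact int_u_lap hu hs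
  rw [step1]
  simp_rw [step2]
  rw [Finset.sum_sub_distrib, hJ, hug, Finset.sum_const, Finset.card_univ, Fintype.card_fin,
    nsmul_eq_mul]
  push_cast
  ring

end SMI

/-- **Second-moment dissipation identity, spatial part** (Lemma 5.2). -/
theorem second_moment_identity (d : ℕ) (hd : 3 ≤ d) (m : ℝ) (hm : 0 < m)
    (u : EuclideanSpace ℝ (Fin d) → ℝ) (hpos : ∀ x, 0 ≤ u x)
    (hu : ContDiff ℝ (⊤ : ℕ∞) u) (hsupp : HasCompactSupport u) :
    2 * (∫ x, u x * (inner ℝ x (gradient (laplacian u) x) : ℝ)) +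
        (2 * m / (m + 1)) *
          ∫ x, (inner ℝ x (gradient (fun y => u y ^ (m + 1)) x) : ℝ) =
      ((d : ℝ) + 2) * (∫ x, ‖gradient u x‖ ^ 2) -
        (2 * (d : ℝ) * m / (m + 1)) * ∫ x, u x ^ (m + 1) ∧
    ((d : ℝ) + 2) * (∫ x, ‖gradient u x‖ ^ 2) -
        (2 * (d : ℝ) * m / (m + 1)) * (∫ x, u x ^ (m + 1)) =
      2 * ((d : ℝ) + 2) * freeEnergy m u -
        2 * (((d : ℝ) * m - ((d : ℝ) + 2)) / (m + 1)) * ∫ x, u x ^ (m + 1) := by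
  constructor
  · have hNu := SMI.nice_of_smooth hu hsupp
    have hP := SMI.nice_rpow hu hsupp hm
    have h2 : ∫ x, (inner ℝ x (gradient (fun y => u y ^ (m + 1)) x) : ℝ)
        = -(d : ℝ) * ∫ x, u x ^ (m + 1) := by
      simp_rw [SMI.inner_grad]
      exact SMI.integral_fderiv_self hP
    have h1 : (2 : ℝ) * ∫ x, u x * (inner ℝ x (gradient (laplacian u) x) : ℝ)
        = ((d : ℝ) + 2) * ∫ x, ∑ i : Fin d, fderiv ℝ u x (SMI.e d i) ^ 2 := by
      simp_rw [SMI.inner_grad]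
      exact SMI.key hu hsupp
    have h3 : ∫ x, ‖gradient u x‖ ^ 2 = ∫ x, ∑ i : Fin d, fderiv ℝ u x (SMI.e d i) ^ 2 :=
      integral_congr_ae (Filter.Eventually.of_forall fun x =>
        SMI.norm_grad_sq u x ((hu.differentiable (by simp)) x))
    rw [h2, h3, h1]
    ring
  · have hm1 : m + 1 ≠ 0 := by positivity
    rw [freeEnergy]
    field_simp
    ring
end
end

section
/- Optimized mass–concentration–confinement inequality (used in Theorem 5.3): Let d ≥ 1 and m > 0. There exists a constant c > 0 depending only on d and m such that for every nonnegative measurable function u : ℝ^d → ℝ with ∫u^{m+1} dx < ∞ and ∫‖x‖² u dx < ∞, ∫_{ℝ^d} u dx ≤ c (∫_{ℝ^d} u^{m+1} dx)^{2/(dm+2(m+1))} (∫_{ℝ^d} ‖x‖² u(x) dx)^{dm/(dm+2(m+1))}. -/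
/-!
Split `∫ u` over the ball `B(0, R)` and its complement. On the ball, Hölder's inequality gives
`(R ^ d * |B(0, 1)|) ^ (m / (m + 1)) * ‖u‖_{m+1}`; off the ball `1 ≤ ‖x‖² / R²`, so the rest is at
most `R⁻² * m₂`. At the radius where `R ^ (d m / (m + 1)) * ‖u‖_{m+1} = R⁻² * m₂`, both quantities
equal `‖u‖_{m+1} ^ (2 (m + 1) / D) * m₂ ^ (d m / D)` with `D = d m + 2 (m + 1)`, which yields the
constant `|B(0, 1)| ^ (m / (m + 1)) + 1`. If `∫ u ^ (m + 1)` or `m₂` vanishes, `u = 0` a.e.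
-/

open MeasureTheory Real Metric Module
open scoped ENNReal

noncomputable section

theorem lintegral_le_measure_univ_rpow_mul_lintegral_rpow {α : Type*} [MeasurableSpace α]
    (μ : Measure α) {p q : ℝ} (hpq : p.HolderConjugate q) {f : α → ℝ≥0∞}
    (hf : AEMeasurable f μ) :
    ∫⁻ x, f x ∂μ ≤ μ Set.univ ^ (1 / p) * (∫⁻ x, f x ^ q ∂μ) ^ (1 / q) := by
  simpa using ENNReal.lintegral_mul_le_Lp_mul_Lq μ hpq aemeasurable_const hf (f := fun _ => 1)

theorem lintegral_eq_zero_of_lintegral_rpow_eq_zero {α : Type*} [MeasurableSpace α]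
    {μ : Measure α} {f : α → ℝ≥0∞} (hf : AEMeasurable f μ) {q : ℝ} (hq : 0 < q)
    (h : ∫⁻ x, f x ^ q ∂μ = 0) : ∫⁻ x, f x ∂μ = 0 := by
  rw [lintegral_eq_zero_iff' hf]
  filter_upwards [(lintegral_eq_zero_iff' (hf.pow_const q)).1 h] with x hx
  simpa [ENNReal.rpow_eq_zero_iff, hq, hq.not_gt] using hx

section Moment
variable {E : Type*} [NormedAddCommGroup E] [MeasurableSpace E]

def secondMoment (μ : Measure E) (f : E → ℝ≥0∞) : ℝ≥0∞ :=
  ∫⁻ x, ENNReal.ofReal (‖x‖ ^ 2) * f x ∂μ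

variable [OpensMeasurableSpace E]

theorem setLIntegral_compl_ball_le_inv_sq_mul_secondMoment (μ : Measure E) (f : E → ℝ≥0∞)
    {R : ℝ} (hR : 0 < R) :
    ∫⁻ x in (ball 0 R)ᶜ, f x ∂μ ≤ ENNReal.ofReal (R ^ 2)⁻¹ * secondMoment μ f := by
  calc ∫⁻ x in (ball 0 R)ᶜ, f x ∂μ
      ≤ ∫⁻ x in (ball 0 R)ᶜ,
          ENNReal.ofReal (R ^ 2)⁻¹ * (ENNReal.ofReal (‖x‖ ^ 2) * f x) ∂μ := by
        refine setLIntegral_mono' measurableSet_ball.compl fun x hx => ?_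
        have hRx : R ≤ ‖x‖ := by simpa using hx
        rw [← mul_assoc, ← ENNReal.ofReal_mul (by positivity)]
        refine le_mul_of_one_le_left' (ENNReal.one_le_ofReal.2 ?_)
        exact (one_le_inv_mul₀ (by positivity)).2 (pow_le_pow_left₀ hR.le hRx 2)
    _ ≤ ∫⁻ x, ENNReal.ofReal (R ^ 2)⁻¹ * (ENNReal.ofReal (‖x‖ ^ 2) * f x) ∂μ :=
        setLIntegral_le_lintegral _ _
    _ = ENNReal.ofReal (R ^ 2)⁻¹ * secondMoment μ f :=
        lintegral_const_mul' _ _ ENNReal.ofReal_ne_top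

theorem lintegral_le_measure_ball_rpow_mul_add_inv_sq_mul_secondMoment (μ : Measure E)
    {p q : ℝ} (hpq : p.HolderConjugate q) {f : E → ℝ≥0∞} (hf : AEMeasurable f μ)
    {R : ℝ} (hR : 0 < R) :
    ∫⁻ x, f x ∂μ ≤ μ (ball 0 R) ^ (1 / p) * (∫⁻ x, f x ^ q ∂μ) ^ (1 / q) +
      ENNReal.ofReal (R ^ 2)⁻¹ * secondMoment μ f := by
  rw [← lintegral_add_compl f measurableSet_ball]
  gcongr ?_ + ?_
  · calc ∫⁻ x in ball 0 R, f x ∂μ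
        ≤ μ.restrict (ball 0 R) Set.univ ^ (1 / p) * (∫⁻ x in ball 0 R, f x ^ q ∂μ) ^ (1 / q) :=
          lintegral_le_measure_univ_rpow_mul_lintegral_rpow _ hpq hf.restrict
      _ ≤ μ (ball 0 R) ^ (1 / p) * (∫⁻ x, f x ^ q ∂μ) ^ (1 / q) := by
          rw [Measure.restrict_apply_univ]
          gcongr
          · exact hpq.symm.one_div_nonneg
          · exact Measure.restrict_le_self
  · exact setLIntegral_compl_ball_le_inv_sq_mul_secondMoment μ f hR

theorem lintegral_eq_zero_of_secondMoment_eq_zero {μ : Measure E} [NullSingletonClass μ]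
    {f : E → ℝ≥0∞} (hf : AEMeasurable f μ) (h : secondMoment μ f = 0) :
    ∫⁻ x, f x ∂μ = 0 := by
  have hmeas : AEMeasurable (fun x => ENNReal.ofReal (‖x‖ ^ 2) * f x) μ := by fun_prop
  rw [lintegral_eq_zero_iff' hf]
  filter_upwards [(lintegral_eq_zero_iff' hmeas).1 h, μ.ae_ne 0] with x hx hx0
  simpa [hx0] using hx

end Moment

/-- Balances the two terms of the splitting: `R ^ (d * m + 2 * (m + 1)) = b ^ (m + 1) / a`. -/
def optimalRadius (d m a b : ℝ) : ℝ := (b ^ (m + 1) / a) ^ (1 / (d * m + 2 * (m + 1)))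

section OptimalRadius

variable {d m a b : ℝ}

theorem optimalRadius_pos (ha : 0 < a) (hb : 0 < b) : 0 < optimalRadius d m a b := by
  unfold optimalRadius
  positivity

theorem log_optimalRadius (ha : 0 < a) (hb : 0 < b) :
    log (optimalRadius d m a b) = ((m + 1) * log b - log a) / (d * m + 2 * (m + 1)) := by
  rw [optimalRadius, log_rpow (by positivity), log_div (by positivity) ha.ne', log_rpow hb]
  ring

theorem optimalRadius_rpow_mul_rpow (hd : 0 ≤ d) (hm : 0 < m) (ha : 0 < a) (hb : 0 < b) :
    optimalRadius d m a b ^ (d * m / (m + 1)) * a ^ (1 / (m + 1)) =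
      a ^ (2 / (d * m + 2 * (m + 1))) * b ^ (d * m / (d * m + 2 * (m + 1))) := by
  have hR := optimalRadius_pos (d := d) (m := m) ha hb
  have hD : 0 < d * m + 2 * (m + 1) := by positivity
  refine log_injOn_pos (by simp only [Set.mem_Ioi]; positivity)
    (by simp only [Set.mem_Ioi]; positivity) ?_
  rw [log_mul (by positivity) (by positivity), log_mul (by positivity) (by positivity),
    log_rpow hR, log_rpow ha, log_rpow ha, log_rpow hb, log_optimalRadius ha hb]
  field_simp
  ring

theorem inv_sq_optimalRadius_mul (hd : 0 ≤ d) (hm : 0 < m) (ha : 0 < a) (hb : 0 < b) :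
    (optimalRadius d m a b ^ 2)⁻¹ * b =
      a ^ (2 / (d * m + 2 * (m + 1))) * b ^ (d * m / (d * m + 2 * (m + 1))) := by
  have hR := optimalRadius_pos (d := d) (m := m) ha hb
  have hD : 0 < d * m + 2 * (m + 1) := by positivity
  refine log_injOn_pos (by simp only [Set.mem_Ioi]; positivity)
    (by simp only [Set.mem_Ioi]; positivity) ?_
  rw [log_mul (by positivity) (by positivity), log_mul (by positivity) (by positivity),
    log_inv, log_pow, log_rpow ha, log_rpow hb, log_optimalRadius ha hb]
  field_simp
  ring

end OptimalRadius

theorem lintegral_le_const_mul_lintegral_rpow_rpow_mul_secondMoment_rpow {E : Type*}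
    [NormedAddCommGroup E] [NormedSpace ℝ E] [MeasurableSpace E] [BorelSpace E]
    [FiniteDimensional ℝ E] [Nontrivial E] (μ : Measure E) [μ.IsAddHaarMeasure]
    {m : ℝ} (hm : 0 < m) {f : E → ℝ≥0∞} (hf : AEMeasurable f μ)
    (hA : ∫⁻ x, f x ^ (m + 1) ∂μ ≠ ⊤) (hB : secondMoment μ f ≠ ⊤) :
    ∫⁻ x, f x ∂μ ≤ ENNReal.ofReal ((μ (ball 0 1)).toReal ^ (m / (m + 1)) + 1) *
      (∫⁻ x, f x ^ (m + 1) ∂μ) ^ (2 / ((finrank ℝ E : ℝ) * m + 2 * (m + 1))) *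
      secondMoment μ f ^ ((finrank ℝ E : ℝ) * m / ((finrank ℝ E : ℝ) * m + 2 * (m + 1))) := by
  set A := ∫⁻ x, f x ^ (m + 1) ∂μ
  set B := secondMoment μ f
  rcases eq_or_ne A 0 with hA0 | hA0
  · rw [lintegral_eq_zero_of_lintegral_rpow_eq_zero hf (by positivity) hA0]
    exact zero_le
  rcases eq_or_ne B 0 with hB0 | hB0
  · rw [lintegral_eq_zero_of_secondMoment_eq_zero hf hB0]
    exact zero_le
  set a := A.toReal
  set b := B.toReal
  set v := (μ (ball 0 1)).toReal
  have ha : 0 < a := ENNReal.toReal_pos hA0 hA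
  have hb : 0 < b := ENNReal.toReal_pos hB0 hB
  have hAa : A = ENNReal.ofReal a := (ENNReal.ofReal_toReal hA).symm
  have hBb : B = ENNReal.ofReal b := (ENNReal.ofReal_toReal hB).symm
  have hv : μ (ball 0 1) = ENNReal.ofReal v :=
    (ENNReal.ofReal_toReal measure_ball_lt_top.ne).symm
  have hpq : ((m + 1) / m).HolderConjugate (m + 1) := by
    rw [Real.holderConjugate_iff, inv_div]
    refine ⟨by rw [lt_div_iff₀ hm]; linarith, by field_simp⟩
  set R := optimalRadius (finrank ℝ E) m a b
  have hR : 0 < R := by unfold R optimalRadius; positivity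
  calc ∫⁻ x, f x ∂μ
      ≤ μ (ball 0 R) ^ (1 / ((m + 1) / m)) * A ^ (1 / (m + 1)) +
          ENNReal.ofReal (R ^ 2)⁻¹ * B :=
        lintegral_le_measure_ball_rpow_mul_add_inv_sq_mul_secondMoment μ hpq hf hR
    _ = ENNReal.ofReal ((R ^ finrank ℝ E * v) ^ (m / (m + 1)) * a ^ (1 / (m + 1)) +
          (R ^ 2)⁻¹ * b) := by
        rw [Measure.addHaar_ball_of_pos μ 0 hR, hv, hAa, hBb, one_div_div,
          ← ENNReal.ofReal_mul (by positivity),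
          ENNReal.ofReal_rpow_of_nonneg (by positivity) (by positivity),
          ENNReal.ofReal_rpow_of_pos ha, ← ENNReal.ofReal_mul (by positivity),
          ← ENNReal.ofReal_mul (by positivity),
          ← ENNReal.ofReal_add (by positivity) (by positivity)]
    _ = ENNReal.ofReal ((v ^ (m / (m + 1)) + 1) *
          (a ^ (2 / ((finrank ℝ E : ℝ) * m + 2 * (m + 1))) *
            b ^ ((finrank ℝ E : ℝ) * m / ((finrank ℝ E : ℝ) * m + 2 * (m + 1))))) := by
        congr 1
        rw [Real.mul_rpow (by positivity) (by positivity), ← Real.rpow_natCast,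
          ← Real.rpow_mul hR.le, ← mul_div_assoc, mul_right_comm,
          optimalRadius_rpow_mul_rpow (by positivity) hm ha hb,
          inv_sq_optimalRadius_mul (by positivity) hm ha hb]
        ring
    _ = _ := by
        rw [hAa, hBb, ENNReal.ofReal_rpow_of_pos ha, ENNReal.ofReal_rpow_of_pos hb,
          ENNReal.ofReal_mul (by positivity), ENNReal.ofReal_mul (by positivity), mul_assoc]

/-- **Optimized mass–concentration–confinement inequality** (used in Theorem 5.3). -/
theorem optimized_mass_concentration_confinement (d : ℕ) (hd : 1 ≤ d) (m : ℝ)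
    (hm : 0 < m) :
    ∃ c : ℝ, 0 < c ∧
      ∀ u : EuclideanSpace ℝ (Fin d) → ℝ, Measurable u → (∀ x, 0 ≤ u x) →
        (∫⁻ x, ENNReal.ofReal (u x ^ (m + 1))) < ⊤ →
        (∫⁻ x, ENNReal.ofReal (‖x‖ ^ 2 * u x)) < ⊤ →
        ∫⁻ x, ENNReal.ofReal (u x) ≤
          ENNReal.ofReal c *
            (∫⁻ x, ENNReal.ofReal (u x ^ (m + 1))) ^
              (2 / ((d : ℝ) * m + 2 * (m + 1))) *
            (∫⁻ x, ENNReal.ofReal (‖x‖ ^ 2 * u x)) ^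
              ((d : ℝ) * m / ((d : ℝ) * m + 2 * (m + 1))) := by
  have : Nontrivial (EuclideanSpace ℝ (Fin d)) :=
    nontrivial_of_finrank_pos (R := ℝ) (by rwa [finrank_euclideanSpace_fin])
  refine ⟨(volume (ball (0 : EuclideanSpace ℝ (Fin d)) 1)).toReal ^ (m / (m + 1)) + 1,
    by positivity, fun u hu hu0 hA hB => ?_⟩
  have hpow : ∀ x, ENNReal.ofReal (u x ^ (m + 1)) = ENNReal.ofReal (u x) ^ (m + 1) := fun x =>
    (ENNReal.ofReal_rpow_of_nonneg (hu0 x) (by positivity)).symm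
  have hmoment : ∀ x, ENNReal.ofReal (‖x‖ ^ 2 * u x) =
      ENNReal.ofReal (‖x‖ ^ 2) * ENNReal.ofReal (u x) := fun x =>
    ENNReal.ofReal_mul (by positivity)
  simp only [hpow, hmoment] at hA hB ⊢
  simpa [secondMoment, finrank_euclideanSpace_fin] using
    lintegral_le_const_mul_lintegral_rpow_rpow_mul_secondMoment_rpow volume hm
      hu.ennreal_ofReal.aemeasurable hA.ne hB.ne
end
end

section
/- Nonexistence of positive radial steady profiles with zero contact angle for nonnegative chemical potential constant (radial case of Theorem 3.4(ii)–(iii)): Let d ≥ 3, m > 0, c ≥ 0 and R > 0. Then there is no twice continuously differentiable function u : [0,R] → ℝ such that u(r) > 0 for all r ∈ [0,R), u'(0) = 0, u(R) = 0, u'(R) = 0, and u''(r) + ((d−1)/r) u'(r) + u(r)^m + c = 0 for all r ∈ (0,R). -/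
open Real Set

/-- Multiplying by the integrating factor `r ^ k` turns the radial equation into
`(r ^ k v)' = - r ^ k f`. -/
theorem hasDerivAt_pow_mul_of_radial_eq {k : ℕ} {v : ℝ → ℝ} {v' f x : ℝ} (hx : 0 < x)
    (hv : HasDerivAt v v' x) (hode : v' + (k / x) * v x + f = 0) :
    HasDerivAt (fun r => r ^ k * v r) (-(x ^ k * f)) x := by
  refine ((hasDerivAt_pow k x).mul hv).congr_deriv ?_
  have hv' : v' = -((k / x) * v x) - f := by linarith
  rcases k with _ | k
  · simp [hv']
  · rw [hv']
    field_simp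
    push_cast
    ring

theorem strictAntiOn_pow_mul_of_radial {k : ℕ} {R : ℝ} {v f : ℝ → ℝ}
    (hv : ContDiffOn ℝ 1 v (Icc 0 R)) (hf : ∀ r ∈ Ioo 0 R, 0 < f r)
    (hode : ∀ r ∈ Ioo 0 R, derivWithin v (Icc 0 R) r + (k / r) * v r + f r = 0) :
    StrictAntiOn (fun r => r ^ k * v r) (Icc 0 R) := by
  refine strictAntiOn_of_deriv_neg (convex_Icc 0 R)
    ((continuousOn_pow k).mul hv.continuousOn) fun x hx => ?_
  rw [interior_Icc] at hx
  have hvx : HasDerivAt v (derivWithin v (Icc 0 R) x) x :=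
    ((hv.differentiableOn one_ne_zero x (Ioo_subset_Icc_self hx)).hasDerivWithinAt).hasDerivAt
      (Icc_mem_nhds hx.1 hx.2)
  rw [(hasDerivAt_pow_mul_of_radial_eq hx.1 hvx (hode x hx)).deriv, neg_lt_zero]
  exact mul_pos (pow_pos hx.1 k) (hf x hx)

/-- Radial Hopf lemma: the flux `r ^ k v` vanishes at `0` and strictly decreases. -/
theorem neg_of_radial_of_eq_zero {k : ℕ} {R : ℝ} {v f : ℝ → ℝ}
    (hv : ContDiffOn ℝ 1 v (Icc 0 R)) (hf : ∀ r ∈ Ioo 0 R, 0 < f r)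
    (hode : ∀ r ∈ Ioo 0 R, derivWithin v (Icc 0 R) r + (k / r) * v r + f r = 0)
    (hv0 : v 0 = 0) {r : ℝ} (hr : r ∈ Ioc 0 R) : v r < 0 := by
  have hflux := strictAntiOn_pow_mul_of_radial hv hf hode
    (left_mem_Icc.2 (hr.1.le.trans hr.2)) (Ioc_subset_Icc_self hr) hr.1
  simp only [hv0, mul_zero] at hflux
  exact neg_of_mul_neg_right hflux (pow_nonneg hr.1.le k)

theorem no_positive_radial_steady_profile_general (d : ℕ) (hd : 3 ≤ d) (m c R : ℝ)
    (hc : 0 ≤ c) (hR : 0 < R)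
    (u : ℝ → ℝ) (hu : ContDiffOn ℝ 2 u (Set.Icc 0 R))
    (hpos : ∀ r ∈ Set.Ico (0 : ℝ) R, 0 < u r)
    (hd0 : derivWithin u (Set.Icc 0 R) 0 = 0)
    (hdR : derivWithin u (Set.Icc 0 R) R = 0)
    (hode : ∀ r ∈ Set.Ioo (0 : ℝ) R,
      derivWithin (derivWithin u (Set.Icc 0 R)) (Set.Icc 0 R) r +
        (((d : ℝ) - 1) / r) * derivWithin u (Set.Icc 0 R) r + u r ^ m + c = 0) :
    False := by
  have hk : ((d - 1 : ℕ) : ℝ) = d - 1 := by push_cast [show 1 ≤ d by omega]; ring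
  have hv : ContDiffOn ℝ 1 (derivWithin u (Icc 0 R)) (Icc 0 R) :=
    hu.derivWithin (uniqueDiffOn_Icc hR) (by norm_num)
  have hf : ∀ r ∈ Ioo 0 R, 0 < u r ^ m + c := fun r hr =>
    add_pos_of_pos_of_nonneg (rpow_pos_of_pos (hpos r ⟨hr.1.le, hr.2⟩) m) hc
  have hneg := neg_of_radial_of_eq_zero (k := d - 1) hv hf
    (fun r hr => by rw [hk, ← add_assoc]; exact hode r hr) hd0 ⟨hR, le_rfl⟩
  exact hneg.ne hdR

/-- **Nonexistence of positive radial steady profiles with zero contact angle for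
nonnegative chemical potential constant** (radial case of Theorem 3.4(ii)–(iii)). -/
theorem no_positive_radial_steady_profile (d : ℕ) (hd : 3 ≤ d) (m c R : ℝ)
    (hm : 0 < m) (hc : 0 ≤ c) (hR : 0 < R)
    (u : ℝ → ℝ) (hu : ContDiffOn ℝ 2 u (Set.Icc 0 R))
    (hpos : ∀ r ∈ Set.Ico (0 : ℝ) R, 0 < u r)
    (hd0 : derivWithin u (Set.Icc 0 R) 0 = 0)
    (huR : u R = 0)
    (hdR : derivWithin u (Set.Icc 0 R) R = 0)
    (hode : ∀ r ∈ Set.Ioo (0 : ℝ) R,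
      derivWithin (derivWithin u (Set.Icc 0 R)) (Set.Icc 0 R) r +
        (((d : ℝ) - 1) / r) * derivWithin u (Set.Icc 0 R) r + u r ^ m + c = 0) :
    False :=
  no_positive_radial_steady_profile_general d hd m c R hc hR u hu hpos hd0 hdR hode
end
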